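/- For every n ≥ 0 and all subsets I, J ⊆ [n], if the entry A'_n(I, J) of the matrix A'_n = U_n A_n V_n is nonzero, then I ⇝ J. -/
import Mathlib


open Finset Polynomial
open scoped Classical

namespace AR

/-- `binVal I = r_n(I) - 1 = Σ_{i ∈ I} 2^(i-1)`. -/
def binVal (I : Finset ℕ) : ℕ := ∑ i ∈ I, 2 ^ (i - 1)

lemma binVal_Icc (m : ℕ) : binVal (Finset.Icc 1 m) = 2 ^ m - 1 := by
  induction m with
  | zero => simp [binVal]
  | succ k ih =>
      rw [binVal, Finset.sum_Icc_succ_top (by omega)]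
      rw [binVal] at ih
      rw [ih]
      have h1 : 1 ≤ 2 ^ k := Nat.one_le_two_pow
      simp only [Nat.add_sub_cancel, pow_succ]
      omega

lemma binVal_lt {n : ℕ} {I : Finset ℕ} (h : I ⊆ Finset.Icc 1 n) : binVal I < 2 ^ n := by
  have h1 : binVal I ≤ binVal (Finset.Icc 1 n) :=
    Finset.sum_le_sum_of_subset h
  have h2 := binVal_Icc n
  have h3 : 1 ≤ 2 ^ n := Nat.one_le_two_pow
  omega

/-- The row/column index (zero-based, i.e. `r_n(I) - 1`) corresponding to a subset `I ⊆ [n]`. -/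
def idx (n : ℕ) (I : Finset ℕ) (h : I ⊆ Finset.Icc 1 n) : Fin (2 ^ n) :=
  ⟨binVal I, binVal_lt h⟩

def blockEquiv (n : ℕ) : Fin (2 ^ n) ⊕ Fin (2 ^ n) ≃ Fin (2 ^ (n + 1)) :=
  finSumFinEquiv.trans (finCongr (by rw [pow_succ, mul_two]))

/-- The pair of Adin–Roichman matrices `(A_n, B_n)`, defined recursively. -/
def ABpair : (n : ℕ) → Matrix (Fin (2 ^ n)) (Fin (2 ^ n)) ℤ × Matrix (Fin (2 ^ n)) (Fin (2 ^ n)) ℤ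
  | 0 => (Matrix.of fun _ _ => 1, Matrix.of fun _ _ => 1)
  | n + 1 =>
      let p := ABpair n
      ((Matrix.reindex (blockEquiv n) (blockEquiv n)) (Matrix.fromBlocks p.1 p.1 p.1 (-p.2)),
       (Matrix.reindex (blockEquiv n) (blockEquiv n)) (Matrix.fromBlocks p.1 p.1 0 (-p.2)))

def A (n : ℕ) : Matrix (Fin (2 ^ n)) (Fin (2 ^ n)) ℤ := (ABpair n).1

def B (n : ℕ) : Matrix (Fin (2 ^ n)) (Fin (2 ^ n)) ℤ := (ABpair n).2

/-- `R` is a (nonempty) integer interval. -/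
def IsInterval (R : Finset ℕ) : Prop := ∃ a b : ℕ, R = Finset.Icc a b

/-- `R` is a run of `I`: a maximal nonempty interval contained in `I`. -/
def IsRun (I R : Finset ℕ) : Prop :=
  R.Nonempty ∧ IsInterval R ∧ R ⊆ I ∧
    ∀ S : Finset ℕ, IsInterval S → S ⊆ I → R ⊆ S → S = R

/-- `R` is a prefix of `S` : `min R = min S` and `R ⊆ S`. -/
def IsPrefixOf (R S : Finset ℕ) : Prop := R.min = S.min ∧ R ⊆ S

/-- `I ≫ J` : every run of `I ∩ J` is a prefix of a run of `I`. -/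
def Gg (I J : Finset ℕ) : Prop :=
  ∀ R : Finset ℕ, IsRun (I ∩ J) R → ∃ S : Finset ℕ, IsRun I S ∧ IsPrefixOf R S

/-- The set of runs of `I`. -/
noncomputable def runs (I : Finset ℕ) : Finset (Finset ℕ) :=
  I.powerset.filter (fun R => IsRun I R)

/-- `π(I)`: the product of (size + 1) over the runs of `I`. -/
noncomputable def piFun (I : Finset ℕ) : ℕ := ∏ R ∈ runs I, (R.card + 1)

/-- `π'_n(I)`: the product of (size + 1) over the runs of `I` not containing `n`. -/
noncomputable def piFun' (n : ℕ) (I : Finset ℕ) : ℕ :=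
  ∏ R ∈ (runs I).filter (fun R => n ∉ R), (R.card + 1)

/-- The subset of `[n]` encoded by a zero-based index `i : Fin (2^n)` (binary digits). -/
def decode (n : ℕ) (i : Fin (2 ^ n)) : Finset ℕ :=
  (Finset.Icc 1 n).filter (fun k => Nat.testBit i.val (k - 1))

/-- The matrix `U_n`, with `U_n(I,J) = 1` if `I ⊇ J` and `0` otherwise. -/
def U (n : ℕ) : Matrix (Fin (2 ^ n)) (Fin (2 ^ n)) ℤ :=
  Matrix.of fun i j => if decode n j ⊆ decode n i then 1 else 0

/-- The matrix `V_n = U_n⁻¹`, with `V_n(I,J) = (-1)^{|I \ J|}` if `I ⊇ J` and `0` otherwise. -/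
def V (n : ℕ) : Matrix (Fin (2 ^ n)) (Fin (2 ^ n)) ℤ :=
  Matrix.of fun i j =>
    if decode n j ⊆ decode n i then (-1) ^ ((decode n i) \ (decode n j)).card else 0

def A' (n : ℕ) : Matrix (Fin (2 ^ n)) (Fin (2 ^ n)) ℤ := U n * A n * V n

def B' (n : ℕ) : Matrix (Fin (2 ^ n)) (Fin (2 ^ n)) ℤ := U n * B n * V n

/-- `E ⪯ I` : `E ⊆ I`, `E` contains no minimal element of a run of `I`,
and `E` contains no two consecutive integers. -/
def SubPrec (E I : Finset ℕ) : Prop :=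
  E ⊆ I ∧ (∀ R : Finset ℕ, (h : IsRun I R) → R.min' h.1 ∉ E) ∧
    ∀ i : ℕ, ¬ (i ∈ E ∧ i + 1 ∈ E)

/-- `I ⇝ J` : `J = ([n] \ I) ∪ E` for some `E ⪯ I`. -/
def Step (n : ℕ) (I J : Finset ℕ) : Prop :=
  ∃ E : Finset ℕ, SubPrec E I ∧ J = (Finset.Icc 1 n \ I) ∪ E

/-- `π_μ` for a composition `μ` of `n`. -/
def piComp {n : ℕ} (μ : Composition n) : ℕ := (μ.blocks.map (· + 1)).prod

/-- `π'_μ` for a composition `μ` of `n`. -/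
def piComp' {n : ℕ} (μ : Composition n) : ℕ := (μ.blocks.dropLast.map (· + 1)).prod

/-- The Thue–Morse sequence: `thueMorse m = s₂(m) % 2`. -/
def thueMorse (m : ℕ) : ℕ := (Nat.digits 2 m).sum % 2

/- ==================== auxiliary lemmas ==================== -/

section Runs

lemma min'_Icc {a b : ℕ} (hab : a ≤ b) (h : (Finset.Icc a b).Nonempty) :
    (Finset.Icc a b).min' h = a := by
  refine le_antisymm (Finset.min'_le _ _ (Finset.mem_Icc.mpr ⟨le_rfl, hab⟩))
    (Finset.le_min' _ _ _ fun y hy => (Finset.mem_Icc.mp hy).1)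

lemma run_min_pred_notMem {I R : Finset ℕ} (h0 : (0 : ℕ) ∉ I) (h : IsRun I R) :
    R.min' h.1 - 1 ∉ I := by
  obtain ⟨a, b, rfl⟩ := h.2.1
  have hab : a ≤ b := by
    have := h.1; rwa [Finset.nonempty_Icc] at this
  have haI : a ∈ I := h.2.2.1 (Finset.mem_Icc.mpr ⟨le_rfl, hab⟩)
  have ha1 : 1 ≤ a := by
    rcases Nat.eq_zero_or_pos a with rfl | hp
    · exact absurd haI h0
    · exact hp
  rw [min'_Icc hab]
  intro hcontra
  have hsub : Finset.Icc (a - 1) b ⊆ I := by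
    intro x hx
    rw [Finset.mem_Icc] at hx
    by_cases hxa : x = a - 1
    · exact hxa ▸ hcontra
    · exact h.2.2.1 (Finset.mem_Icc.mpr ⟨by omega, hx.2⟩)
  have heq := h.2.2.2 (Finset.Icc (a - 1) b) ⟨a - 1, b, rfl⟩ hsub
    (Finset.Icc_subset_Icc (by omega) le_rfl)
  have : a - 1 ∈ Finset.Icc a b := heq ▸ (Finset.mem_Icc.mpr ⟨le_rfl, by omega⟩)
  rw [Finset.mem_Icc] at this
  omega

lemma exists_run_min {I : Finset ℕ} {m : ℕ} (h0 : (0 : ℕ) ∉ I) (hm : m ∈ I)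
    (hp : m - 1 ∉ I) : ∃ R, ∃ h : IsRun I R, R.min' h.1 = m := by
  have hm1 : 1 ≤ m := by
    rcases Nat.eq_zero_or_pos m with rfl | h
    · exact absurd hm h0
    · exact h
  have hex : ∃ t, m + t + 1 ∉ I := by
    refine ⟨I.sup id, fun hc => ?_⟩
    have := Finset.le_sup (f := id) hc
    simp only [id] at this
    omega
  set k := Nat.find hex with hkdef
  have hk : m + k + 1 ∉ I := Nat.find_spec hex
  have hlt : ∀ t, t < k → m + t + 1 ∈ I := fun t ht => not_not.mp (Nat.find_min hex ht)
  have hne : (Finset.Icc m (m + k)).Nonempty := Finset.nonempty_Icc.mpr (by omega)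
  have hsub : Finset.Icc m (m + k) ⊆ I := by
    intro x hx
    rw [Finset.mem_Icc] at hx
    by_cases hxm : x = m
    · exact hxm ▸ hm
    · have hxI := hlt (x - m - 1) (by omega)
      rwa [show m + (x - m - 1) + 1 = x by omega] at hxI
  have hrun : IsRun I (Finset.Icc m (m + k)) := by
    refine ⟨hne, ⟨m, m + k, rfl⟩, hsub, ?_⟩
    rintro S ⟨c, d, rfl⟩ hSI hRS
    have hc : c ≤ m ∧ m ≤ d := Finset.mem_Icc.mp (hRS (Finset.mem_Icc.mpr ⟨le_rfl, by omega⟩))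
    have hd : m + k ≤ d := (Finset.mem_Icc.mp (hRS (Finset.mem_Icc.mpr ⟨by omega, le_rfl⟩))).2
    have hcm : c = m := by
      by_contra hne'
      exact hp (hSI (Finset.mem_Icc.mpr ⟨by omega, by omega⟩))
    have hdm : d = m + k := by
      by_contra hne'
      exact hk (hSI (Finset.mem_Icc.mpr ⟨by omega, by omega⟩))
    rw [hcm, hdm]
  exact ⟨_, hrun, min'_Icc (by omega) hrun.1⟩

lemma subPrec_iff {E I : Finset ℕ} (h0 : (0 : ℕ) ∉ I) :
    SubPrec E I ↔ E ⊆ I ∧ (∀ m ∈ E, m - 1 ∈ I) ∧ ∀ i : ℕ, ¬ (i ∈ E ∧ i + 1 ∈ E) := by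
  constructor
  · rintro ⟨hEI, hmin, hcons⟩
    refine ⟨hEI, fun m hmE => ?_, hcons⟩
    by_contra hp
    obtain ⟨R, hR, hRmin⟩ := exists_run_min h0 (hEI hmE) hp
    exact hmin R hR (hRmin ▸ hmE)
  · rintro ⟨hEI, hpred, hcons⟩
    exact ⟨hEI, fun R hR hmem => run_min_pred_notMem h0 hR (hpred _ hmem), hcons⟩

end Runs

section StepLemmas

lemma zero_notMem_of_subset_Icc {n : ℕ} {I : Finset ℕ} (hI : I ⊆ Finset.Icc 1 n) :
    (0 : ℕ) ∉ I := by
  intro hc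
  have := Finset.mem_Icc.mp (hI hc)
  omega

lemma step_zero : Step 0 ∅ ∅ :=
  ⟨∅, ⟨Finset.empty_subset _, fun _ _ => Finset.notMem_empty _,
    fun _ h => Finset.notMem_empty _ h.1⟩, by simp⟩

lemma step_insert_right {n : ℕ} {I J : Finset ℕ} (hnI : n + 1 ∉ I) (h : Step n I J) :
    Step (n + 1) I (insert (n + 1) J) := by
  obtain ⟨E, hE, rfl⟩ := h
  refine ⟨E, hE, ?_⟩
  ext x
  simp only [Finset.mem_insert, Finset.mem_union, Finset.mem_sdiff, Finset.mem_Icc]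
  constructor
  · rintro (rfl | ⟨⟨h1, h2⟩, h3⟩ | hx)
    · exact Or.inl ⟨⟨by omega, le_rfl⟩, hnI⟩
    · exact Or.inl ⟨⟨h1, by omega⟩, h3⟩
    · exact Or.inr hx
  · rintro (⟨⟨h1, h2⟩, h3⟩ | hx)
    · by_cases hx : x = n + 1
      · exact Or.inl hx
      · exact Or.inr (Or.inl ⟨⟨h1, by omega⟩, h3⟩)
    · exact Or.inr (Or.inr hx)

lemma Icc_sdiff_insert {n : ℕ} (I : Finset ℕ) :
    Finset.Icc 1 (n + 1) \ insert (n + 1) I = Finset.Icc 1 n \ I := by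
  ext x
  simp only [Finset.mem_sdiff, Finset.mem_Icc, Finset.mem_insert, not_or]
  constructor
  · rintro ⟨⟨h1, h2⟩, h3, h4⟩
    exact ⟨⟨h1, by omega⟩, h4⟩
  · rintro ⟨⟨h1, h2⟩, h3⟩
    exact ⟨⟨h1, by omega⟩, by omega, h3⟩

lemma step_insert_left {n : ℕ} {I J : Finset ℕ} (hI : I ⊆ Finset.Icc 1 n) (h : Step n I J) :
    Step (n + 1) (insert (n + 1) I) J := by
  obtain ⟨E, hE, rfl⟩ := h
  have h0I : (0 : ℕ) ∉ I := zero_notMem_of_subset_Icc hI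
  have h0I' : (0 : ℕ) ∉ insert (n + 1) I := by
    intro hc
    rcases Finset.mem_insert.mp hc with h' | h'
    · omega
    · exact h0I h'
  rw [subPrec_iff h0I] at hE
  refine ⟨E, (subPrec_iff h0I').mpr ⟨hE.1.trans (Finset.subset_insert _ _),
    fun m hm => Finset.mem_insert_of_mem (hE.2.1 m hm), hE.2.2⟩, ?_⟩
  rw [Icc_sdiff_insert]

lemma step_insert_both {n : ℕ} {I J : Finset ℕ} (hI : I ⊆ Finset.Icc 1 n)
    (hnI : n ∈ I) (hnJ : n ∉ J) (h : Step n I J) :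
    Step (n + 1) (insert (n + 1) I) (insert (n + 1) J) := by
  obtain ⟨E, hE, rfl⟩ := h
  have h0I : (0 : ℕ) ∉ I := zero_notMem_of_subset_Icc hI
  have h0I' : (0 : ℕ) ∉ insert (n + 1) I := by
    intro hc
    rcases Finset.mem_insert.mp hc with h' | h'
    · omega
    · exact h0I h'
  rw [subPrec_iff h0I] at hE
  have hEIcc : E ⊆ Finset.Icc 1 n := hE.1.trans hI
  have hnE : n ∉ E := fun hc => hnJ (Finset.mem_union_right _ hc)
  refine ⟨insert (n + 1) E, (subPrec_iff h0I').mpr ⟨?_, ?_, ?_⟩, ?_⟩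
  · exact Finset.insert_subset_insert _ hE.1
  · intro m hm
    rcases Finset.mem_insert.mp hm with rfl | hm'
    · have : n + 1 - 1 = n := by omega
      rw [this]
      exact Finset.mem_insert_of_mem hnI
    · exact Finset.mem_insert_of_mem (hE.2.1 m hm')
  · intro i hi
    rcases Finset.mem_insert.mp hi.1 with h1 | h1 <;> rcases Finset.mem_insert.mp hi.2 with h2 | h2
    · omega
    · have := Finset.mem_Icc.mp (hEIcc h2); omega
    · have hin : i = n := by omega
      exact hnE (hin ▸ h1)
    · exact hE.2.2 i ⟨h1, h2⟩
  · rw [Icc_sdiff_insert]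
    ext x
    simp only [Finset.mem_insert, Finset.mem_union, Finset.mem_sdiff, Finset.mem_Icc]
    constructor
    · rintro (rfl | ⟨h1, h2⟩ | hx)
      · exact Or.inr (Or.inl rfl)
      · exact Or.inl ⟨h1, h2⟩
      · exact Or.inr (Or.inr hx)
    · rintro (⟨h1, h2⟩ | rfl | hx)
      · exact Or.inr (Or.inl ⟨h1, h2⟩)
      · exact Or.inl rfl
      · exact Or.inr (Or.inr hx)

end StepLemmas

section Decode

lemma testBit_two_pow_add_lt {n i k : ℕ} (h : i < 2 ^ n) (hk : k < n) :
    Nat.testBit (2 ^ n + i) k = Nat.testBit i k := by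
  rw [Nat.testBit_eq_decide_div_mod_eq, Nat.testBit_eq_decide_div_mod_eq]
  have h1 : 2 ^ n + i = 2 ^ k * 2 ^ (n - k) + i := by
    rw [← pow_add, show k + (n - k) = n by omega]
  rw [h1, Nat.mul_add_div (by positivity)]
  have h2 : 2 ^ (n - k) % 2 = 0 := by
    obtain ⟨t, ht⟩ := Nat.exists_eq_succ_of_ne_zero (show n - k ≠ 0 by omega)
    rw [ht, pow_succ]
    omega
  have h3 : (2 ^ (n - k) + i / 2 ^ k) % 2 = i / 2 ^ k % 2 := by omega
  rw [h3]

lemma testBit_two_pow_add_self {n i : ℕ} (h : i < 2 ^ n) :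
    Nat.testBit (2 ^ n + i) n = true := by
  rw [Nat.testBit_eq_decide_div_mod_eq]
  have h1 : (2 ^ n + i) / 2 ^ n = 1 :=
    Nat.div_eq_of_lt_le (by omega) (by omega)
  rw [h1]
  rfl

lemma decode_subset (n : ℕ) (i : Fin (2 ^ n)) : decode n i ⊆ Finset.Icc 1 n :=
  Finset.filter_subset _ _

lemma notMem_decode (n : ℕ) (i : Fin (2 ^ n)) : n + 1 ∉ decode n i := fun h => by
  have := Finset.mem_Icc.mp (decode_subset n i h)
  omega

lemma blockEquiv_inl (n : ℕ) (i : Fin (2 ^ n)) :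
    ((blockEquiv n) (Sum.inl i) : Fin (2 ^ (n + 1))).val = i.val := by
  simp [blockEquiv]

lemma blockEquiv_inr (n : ℕ) (i : Fin (2 ^ n)) :
    ((blockEquiv n) (Sum.inr i) : Fin (2 ^ (n + 1))).val = 2 ^ n + i.val := by
  simp [blockEquiv]
  omega

lemma decode_blockEquiv_inl (n : ℕ) (i : Fin (2 ^ n)) :
    decode (n + 1) (blockEquiv n (Sum.inl i)) = decode n i := by
  ext k
  simp only [decode, Finset.mem_filter, Finset.mem_Icc, blockEquiv_inl]
  constructor
  · rintro ⟨⟨h1, h2⟩, hb⟩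
    have hk : k ≤ n := by
      by_contra hk
      have hkn : k - 1 = n := by omega
      rw [hkn, Nat.testBit_eq_false_of_lt i.isLt] at hb
      exact Bool.false_ne_true hb
    exact ⟨⟨h1, hk⟩, hb⟩
  · rintro ⟨⟨h1, h2⟩, hb⟩
    exact ⟨⟨h1, by omega⟩, hb⟩

lemma decode_blockEquiv_inr (n : ℕ) (i : Fin (2 ^ n)) :
    decode (n + 1) (blockEquiv n (Sum.inr i)) = insert (n + 1) (decode n i) := by
  ext k
  simp only [decode, Finset.mem_filter, Finset.mem_Icc, Finset.mem_insert, blockEquiv_inr]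
  constructor
  · rintro ⟨⟨h1, h2⟩, hb⟩
    by_cases hk : k = n + 1
    · exact Or.inl hk
    · right
      refine ⟨⟨h1, by omega⟩, ?_⟩
      rwa [testBit_two_pow_add_lt i.isLt (by omega)] at hb
  · rintro (rfl | ⟨⟨h1, h2⟩, hb⟩)
    · refine ⟨⟨by omega, le_rfl⟩, ?_⟩
      have hkn : n + 1 - 1 = n := by omega
      rw [hkn]
      exact testBit_two_pow_add_self i.isLt
    · exact ⟨⟨h1, by omega⟩, by rwa [testBit_two_pow_add_lt i.isLt (by omega)]⟩

lemma subset_Icc_of_not_mem {n : ℕ} {I : Finset ℕ} (hI : I ⊆ Finset.Icc 1 (n + 1))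
    (h : n + 1 ∉ I) : I ⊆ Finset.Icc 1 n := by
  intro x hx
  have h1 := Finset.mem_Icc.mp (hI hx)
  have h2 : x ≠ n + 1 := fun e => h (e ▸ hx)
  rw [Finset.mem_Icc]
  omega

lemma erase_subset_Icc {n : ℕ} {I : Finset ℕ} (hI : I ⊆ Finset.Icc 1 (n + 1)) :
    I.erase (n + 1) ⊆ Finset.Icc 1 n := by
  intro x hx
  have h1 := Finset.mem_of_mem_erase hx
  have h2 := Finset.ne_of_mem_erase hx
  have h3 := Finset.mem_Icc.mp (hI h1)
  rw [Finset.mem_Icc]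
  omega

lemma idx_inl {n : ℕ} {I : Finset ℕ} (hI : I ⊆ Finset.Icc 1 (n + 1)) (h : n + 1 ∉ I) :
    idx (n + 1) I hI = blockEquiv n (Sum.inl (idx n I (subset_Icc_of_not_mem hI h))) := by
  apply Fin.ext
  rw [blockEquiv_inl]
  rfl

lemma idx_inr {n : ℕ} {I : Finset ℕ} (hI : I ⊆ Finset.Icc 1 (n + 1)) (h : n + 1 ∈ I) :
    idx (n + 1) I hI = blockEquiv n (Sum.inr (idx n (I.erase (n + 1)) (erase_subset_Icc hI))) := by
  apply Fin.ext
  rw [blockEquiv_inr]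
  show binVal I = 2 ^ n + binVal (I.erase (n + 1))
  rw [binVal, binVal, ← Finset.add_sum_erase _ _ h]
  congr 1

end Decode

section Blocks

lemma A_succ (n : ℕ) : A (n + 1) = (Matrix.reindex (blockEquiv n) (blockEquiv n))
    (Matrix.fromBlocks (A n) (A n) (A n) (-(B n))) := rfl

lemma B_succ (n : ℕ) : B (n + 1) = (Matrix.reindex (blockEquiv n) (blockEquiv n))
    (Matrix.fromBlocks (A n) (A n) 0 (-(B n))) := rfl

lemma sdiff_insert_insert {n : ℕ} (da db : Finset ℕ) (ha : n + 1 ∉ da) :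
    insert (n + 1) da \ insert (n + 1) db = da \ db := by
  ext x
  simp only [Finset.mem_sdiff, Finset.mem_insert, not_or]
  constructor
  · rintro ⟨h1 | h1, h2, h3⟩
    · exact absurd h1 h2
    · exact ⟨h1, h3⟩
  · rintro ⟨h1, h2⟩
    exact ⟨Or.inr h1, fun e => ha (e ▸ h1), h2⟩

lemma U_succ (n : ℕ) : U (n + 1) = (Matrix.reindex (blockEquiv n) (blockEquiv n))
    (Matrix.fromBlocks (U n) 0 (U n) (U n)) := by
  ext i j
  obtain ⟨a, rfl⟩ := (blockEquiv n).surjective i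
  obtain ⟨b, rfl⟩ := (blockEquiv n).surjective j
  rw [Matrix.reindex_apply, Matrix.submatrix_apply, Equiv.symm_apply_apply,
    Equiv.symm_apply_apply]
  rcases a with a | a <;> rcases b with b | b
  · simp only [U, Matrix.of_apply, Matrix.fromBlocks_apply₁₁, decode_blockEquiv_inl]
  · simp only [U, Matrix.of_apply, Matrix.fromBlocks_apply₁₂, decode_blockEquiv_inl,
      decode_blockEquiv_inr, Matrix.zero_apply]
    rw [if_neg fun hc => notMem_decode n a (hc (Finset.mem_insert_self _ _))]
  · simp only [U, Matrix.of_apply, Matrix.fromBlocks_apply₂₁, decode_blockEquiv_inl,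
      decode_blockEquiv_inr, Finset.subset_insert_iff_of_notMem (notMem_decode n b)]
  · simp only [U, Matrix.of_apply, Matrix.fromBlocks_apply₂₂, decode_blockEquiv_inr,
      Finset.insert_subset_insert_iff (notMem_decode n b)]

lemma V_succ (n : ℕ) : V (n + 1) = (Matrix.reindex (blockEquiv n) (blockEquiv n))
    (Matrix.fromBlocks (V n) 0 (-(V n)) (V n)) := by
  ext i j
  obtain ⟨a, rfl⟩ := (blockEquiv n).surjective i
  obtain ⟨b, rfl⟩ := (blockEquiv n).surjective j
  rw [Matrix.reindex_apply, Matrix.submatrix_apply, Equiv.symm_apply_apply,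
    Equiv.symm_apply_apply]
  rcases a with a | a <;> rcases b with b | b
  · simp only [V, Matrix.of_apply, Matrix.fromBlocks_apply₁₁, decode_blockEquiv_inl]
  · simp only [V, Matrix.of_apply, Matrix.fromBlocks_apply₁₂, decode_blockEquiv_inl,
      decode_blockEquiv_inr, Matrix.zero_apply]
    rw [if_neg fun hc => notMem_decode n a (hc (Finset.mem_insert_self _ _))]
  · simp only [V, Matrix.of_apply, Matrix.fromBlocks_apply₂₁, decode_blockEquiv_inl,
      decode_blockEquiv_inr, Matrix.neg_apply,
      Finset.subset_insert_iff_of_notMem (notMem_decode n b)]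
    by_cases hc : decode n b ⊆ decode n a
    · rw [if_pos hc, if_pos hc]
      rw [Finset.insert_sdiff_of_notMem _ (fun hc2 => notMem_decode n b hc2),
        Finset.card_insert_of_notMem (fun hc2 => notMem_decode n a (Finset.mem_sdiff.mp hc2).1),
        pow_succ]
      ring
    · rw [if_neg hc, if_neg hc, neg_zero]
  · simp only [V, Matrix.of_apply, Matrix.fromBlocks_apply₂₂, decode_blockEquiv_inr,
      Finset.insert_subset_insert_iff (notMem_decode n b),
      sdiff_insert_insert _ _ (notMem_decode n a)]

lemma A'_succ (n : ℕ) : A' (n + 1) = (Matrix.reindex (blockEquiv n) (blockEquiv n))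
    (Matrix.fromBlocks 0 (A' n) (A' n + B' n) (A' n - B' n)) := by
  rw [A', U_succ, A_succ, V_succ, Matrix.reindex_apply, Matrix.reindex_apply,
    Matrix.reindex_apply, Matrix.reindex_apply, Matrix.submatrix_mul_equiv,
    Matrix.submatrix_mul_equiv, Matrix.fromBlocks_multiply, Matrix.fromBlocks_multiply]
  refine congrArg (fun M : Matrix (Fin (2 ^ n) ⊕ Fin (2 ^ n)) (Fin (2 ^ n) ⊕ Fin (2 ^ n)) ℤ =>
    M.submatrix ⇑(blockEquiv n).symm ⇑(blockEquiv n).symm) ?_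
  rw [Matrix.fromBlocks_inj]
  simp only [A', B']
  refine ⟨by noncomm_ring, by noncomm_ring, by noncomm_ring, by noncomm_ring⟩

lemma B'_succ (n : ℕ) : B' (n + 1) = (Matrix.reindex (blockEquiv n) (blockEquiv n))
    (Matrix.fromBlocks 0 (A' n) (B' n) (A' n - B' n)) := by
  rw [B', U_succ, B_succ, V_succ, Matrix.reindex_apply, Matrix.reindex_apply,
    Matrix.reindex_apply, Matrix.reindex_apply, Matrix.submatrix_mul_equiv,
    Matrix.submatrix_mul_equiv, Matrix.fromBlocks_multiply, Matrix.fromBlocks_multiply]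
  refine congrArg (fun M : Matrix (Fin (2 ^ n) ⊕ Fin (2 ^ n)) (Fin (2 ^ n) ⊕ Fin (2 ^ n)) ℤ =>
    M.submatrix ⇑(blockEquiv n).symm ⇑(blockEquiv n).symm) ?_
  rw [Matrix.fromBlocks_inj]
  simp only [A', B']
  refine ⟨by noncomm_ring, by noncomm_ring, by noncomm_ring, by noncomm_ring⟩

lemma A'_apply_succ (n : ℕ) (a b : Fin (2 ^ n) ⊕ Fin (2 ^ n)) :
    A' (n + 1) (blockEquiv n a) (blockEquiv n b) =
      (Matrix.fromBlocks 0 (A' n) (A' n + B' n) (A' n - B' n)) a b := by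
  rw [A'_succ, Matrix.reindex_apply, Matrix.submatrix_apply, Equiv.symm_apply_apply,
    Equiv.symm_apply_apply]

lemma B'_apply_succ (n : ℕ) (a b : Fin (2 ^ n) ⊕ Fin (2 ^ n)) :
    B' (n + 1) (blockEquiv n a) (blockEquiv n b) =
      (Matrix.fromBlocks 0 (A' n) (B' n) (A' n - B' n)) a b := by
  rw [B'_succ, Matrix.reindex_apply, Matrix.submatrix_apply, Equiv.symm_apply_apply,
    Equiv.symm_apply_apply]

end Blocks

lemma key (n : ℕ) :
    (∀ (I J : Finset ℕ) (hI : I ⊆ Finset.Icc 1 n) (hJ : J ⊆ Finset.Icc 1 n),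
        A' n (idx n I hI) (idx n J hJ) ≠ 0 → Step n I J) ∧
    (∀ (I J : Finset ℕ) (hI : I ⊆ Finset.Icc 1 n) (hJ : J ⊆ Finset.Icc 1 n),
        B' n (idx n I hI) (idx n J hJ) ≠ 0 → Step n I J) ∧
    (∀ (I J : Finset ℕ) (hI : I ⊆ Finset.Icc 1 n) (hJ : J ⊆ Finset.Icc 1 n),
        A' n (idx n I hI) (idx n J hJ) - B' n (idx n I hI) (idx n J hJ) ≠ 0 →
          Step n I J ∧ n ∉ J ∧ n ∈ I) := by
  induction n with
  | zero =>
    have hIcc : Finset.Icc 1 0 = (∅ : Finset ℕ) := Finset.Icc_eq_empty (by omega)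
    have hstep : ∀ (I J : Finset ℕ), I ⊆ Finset.Icc 1 0 → J ⊆ Finset.Icc 1 0 → Step 0 I J := by
      intro I J hI hJ
      rw [hIcc, Finset.subset_empty] at hI hJ
      rw [hI, hJ]
      exact step_zero
    refine ⟨fun I J hI hJ _ => hstep I J hI hJ, fun I J hI hJ _ => hstep I J hI hJ, ?_⟩
    intro I J hI hJ h
    have hAB : A' 0 = B' 0 := rfl
    rw [hAB] at h
    exact absurd (sub_self _) h
  | succ n ih =>
    obtain ⟨ihA, ihB, ihC⟩ := ih
    refine ⟨?_, ?_, ?_⟩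
    · intro I J hI hJ h
      by_cases hIm : n + 1 ∈ I <;> by_cases hJm : n + 1 ∈ J
      · -- bottom right : A' - B'
        rw [idx_inr hI hIm, idx_inr hJ hJm, A'_apply_succ] at h
        simp only [Matrix.fromBlocks_apply₂₂, Matrix.sub_apply] at h
        obtain ⟨hs, hnJ, hnI⟩ := ihC _ _ _ _ h
        have hres := step_insert_both (erase_subset_Icc hI) hnI hnJ hs
        rwa [Finset.insert_erase hIm, Finset.insert_erase hJm] at hres
      · -- bottom left : A' + B'
        rw [idx_inr hI hIm, idx_inl hJ hJm, A'_apply_succ] at h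
        simp only [Matrix.fromBlocks_apply₂₁, Matrix.add_apply] at h
        have hs : Step n (I.erase (n + 1)) J := by
          by_cases h1 : A' n (idx n (I.erase (n + 1)) (erase_subset_Icc hI))
              (idx n J (subset_Icc_of_not_mem hJ hJm)) = 0
          · rw [h1, zero_add] at h
            exact ihB _ _ _ _ h
          · exact ihA _ _ _ _ h1
        have hres := step_insert_left (erase_subset_Icc hI) hs
        rwa [Finset.insert_erase hIm] at hres
      · -- top right : A'
        rw [idx_inl hI hIm, idx_inr hJ hJm, A'_apply_succ] at h
        simp only [Matrix.fromBlocks_apply₁₂] at h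
        have hs := ihA _ _ _ _ h
        have hres := step_insert_right hIm hs
        rwa [Finset.insert_erase hJm] at hres
      · -- top left : 0
        rw [idx_inl hI hIm, idx_inl hJ hJm, A'_apply_succ] at h
        simp only [Matrix.fromBlocks_apply₁₁, Matrix.zero_apply] at h
        exact absurd rfl h
    · intro I J hI hJ h
      by_cases hIm : n + 1 ∈ I <;> by_cases hJm : n + 1 ∈ J
      · rw [idx_inr hI hIm, idx_inr hJ hJm, B'_apply_succ] at h
        simp only [Matrix.fromBlocks_apply₂₂, Matrix.sub_apply] at h
        obtain ⟨hs, hnJ, hnI⟩ := ihC _ _ _ _ h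
        have hres := step_insert_both (erase_subset_Icc hI) hnI hnJ hs
        rwa [Finset.insert_erase hIm, Finset.insert_erase hJm] at hres
      · rw [idx_inr hI hIm, idx_inl hJ hJm, B'_apply_succ] at h
        simp only [Matrix.fromBlocks_apply₂₁] at h
        have hs := ihB _ _ _ _ h
        have hres := step_insert_left (erase_subset_Icc hI) hs
        rwa [Finset.insert_erase hIm] at hres
      · rw [idx_inl hI hIm, idx_inr hJ hJm, B'_apply_succ] at h
        simp only [Matrix.fromBlocks_apply₁₂] at h
        have hs := ihA _ _ _ _ h
        have hres := step_insert_right hIm hs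
        rwa [Finset.insert_erase hJm] at hres
      · rw [idx_inl hI hIm, idx_inl hJ hJm, B'_apply_succ] at h
        simp only [Matrix.fromBlocks_apply₁₁, Matrix.zero_apply] at h
        exact absurd rfl h
    · intro I J hI hJ h
      by_cases hIm : n + 1 ∈ I <;> by_cases hJm : n + 1 ∈ J
      · rw [idx_inr hI hIm, idx_inr hJ hJm, A'_apply_succ, B'_apply_succ] at h
        simp only [Matrix.fromBlocks_apply₂₂] at h
        exact absurd (sub_self _) h
      · rw [idx_inr hI hIm, idx_inl hJ hJm, A'_apply_succ, B'_apply_succ] at h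
        simp only [Matrix.fromBlocks_apply₂₁, Matrix.add_apply] at h
        rw [add_sub_cancel_right] at h
        have hs := ihA _ _ _ _ h
        have hres := step_insert_left (erase_subset_Icc hI) hs
        rw [Finset.insert_erase hIm] at hres
        exact ⟨hres, hJm, hIm⟩
      · rw [idx_inl hI hIm, idx_inr hJ hJm, A'_apply_succ, B'_apply_succ] at h
        simp only [Matrix.fromBlocks_apply₁₂] at h
        exact absurd (sub_self _) h
      · rw [idx_inl hI hIm, idx_inl hJ hJm, A'_apply_succ, B'_apply_succ] at h
        simp only [Matrix.fromBlocks_apply₁₁, Matrix.zero_apply] at h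
        exact absurd (sub_self _) h


theorem stmt11 (n : ℕ) (I J : Finset ℕ) (hI : I ⊆ Finset.Icc 1 n) (hJ : J ⊆ Finset.Icc 1 n)
    (h : A' n (idx n I hI) (idx n J hJ) ≠ 0) :
    Step n I J :=
  (key n).1 I J hI hJ h

end AR
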